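/- For every real number L with 0 < L < π, the infinite product ∏_{k=0}^∞ (2 + (πk/L)²)/|(πk/L)² − 1| converges and equals √2 · sinh(√2 L)/sin L. Consequently, the Kramers rate prefactor (1/2π)·√(∏_{k=0}^∞ (2+(πk/L)²)/|−1+(πk/L)²|) equals (1/(2^{3/4} π))·√(sinh(√2 L)/sin L). -/

import Mathlib

/-!
For `k ≥ 1` the `k`-th factor is `(1 + 2L²/(π²k²)) / (1 - L²/(π²k²))`, the `|·|` being harmless
because `L < π`. The product over `k ≥ 1` is therefore the quotient of Euler's products
`sinh(√2 L)/(√2 L) = ∏ (1 + 2L²/(π²k²))` and `sin L / L = ∏ (1 - L²/(π²k²))`, both convergent,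
with `sin L ≠ 0`; the `k = 0` factor contributes `2`.
-/

open Real Filter

namespace Real

lemma multipliable_one_add_div_succ_sq (c : ℝ) :
    Multipliable fun j : ℕ => 1 + c / ((j : ℝ) + 1) ^ 2 := by
  apply Real.multipliable_one_add_of_summable
  have := (summable_nat_add_iff 1).mpr (summable_one_div_nat_pow.mpr one_lt_two)
  simpa [div_eq_mul_one_div c] using this.mul_left c

lemma hasProd_euler_sin {x : ℝ} (hx : x ≠ 0) :
    HasProd (fun j : ℕ => 1 - x ^ 2 / ((j : ℝ) + 1) ^ 2) (sin (π * x) / (π * x)) := by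
  have hmul : Multipliable fun j : ℕ => 1 - x ^ 2 / ((j : ℝ) + 1) ^ 2 := by
    simpa only [neg_div, ← sub_eq_add_neg] using multipliable_one_add_div_succ_sq (-x ^ 2)
  have hπx : π * x ≠ 0 := mul_ne_zero pi_ne_zero hx
  rw [hmul.hasProd_iff_tendsto_nat]
  refine ((tendsto_euler_sin_prod x).div_const (π * x)).congr fun n => ?_
  field_simp

lemma hasProd_euler_sinh {x : ℝ} (hx : x ≠ 0) :
    HasProd (fun j : ℕ => 1 + x ^ 2 / ((j : ℝ) + 1) ^ 2) (sinh (π * x) / (π * x)) := by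
  have hπx : π * x ≠ 0 := mul_ne_zero pi_ne_zero hx
  rw [(multipliable_one_add_div_succ_sq (x ^ 2)).hasProd_iff_tendsto_nat,
    ← tendsto_ofReal_iff]
  have h := (Complex.tendsto_euler_sin_prod (x * Complex.I)).div_const (π * x * Complex.I)
  have hlim : Complex.sin (π * (x * Complex.I)) / (π * x * Complex.I)
      = ((sinh (π * x) / (π * x) : ℝ) : ℂ) := by
    rw [← mul_assoc, Complex.sin_mul_I]
    push_cast
    field_simp
  rw [hlim] at h
  have hfactor (j : ℕ) : 1 - ((x : ℂ) * Complex.I) ^ 2 / ((j : ℂ) + 1) ^ 2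
      = ((1 + x ^ 2 / ((j : ℝ) + 1) ^ 2 : ℝ) : ℂ) := by
    push_cast
    rw [mul_pow, Complex.I_sq]
    ring
  refine h.congr fun n => ?_
  simp_rw [hfactor, ← Complex.ofReal_prod, ← mul_assoc]
  exact mul_div_cancel_left₀ _ (by simpa using hπx)

theorem hasProd_sq_add_div_abs_sq_sub_one {a L : ℝ} (ha : a ≠ 0) (hL0 : 0 < L) (hLpi : L < π) :
    HasProd (fun k : ℕ => (a ^ 2 + (π * k / L) ^ 2) / |(π * k / L) ^ 2 - 1|)
      (a * sinh (a * L) / sin L) := by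
  have hsinL : 0 < sin L := sin_pos_of_pos_of_lt_pi hL0 hLpi
  have hsinh := hasProd_euler_sinh (x := a * L / π) (by positivity)
  have hsin := hasProd_euler_sin (x := L / π) (by positivity)
  rw [mul_div_cancel₀ _ pi_ne_zero] at hsinh hsin
  have hfactor (j : ℕ) :
      (a ^ 2 + (π * (j + 1 : ℕ) / L) ^ 2) / |(π * (j + 1 : ℕ) / L) ^ 2 - 1|
        = (1 + (a * L / π) ^ 2 / ((j : ℝ) + 1) ^ 2) / (1 - (L / π) ^ 2 / ((j : ℝ) + 1) ^ 2) := by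
    have hj : L < π * ((j : ℝ) + 1) := by nlinarith [pi_pos, (Nat.cast_nonneg j : (0 : ℝ) ≤ j)]
    have hgt : 1 < (π * ((j : ℝ) + 1) / L) ^ 2 := one_lt_pow₀ ((one_lt_div hL0).mpr hj) two_ne_zero
    push_cast
    rw [abs_of_pos (sub_pos.mpr hgt)]
    field_simp
    ring
  have htail := hsinh.div₀ hsin (by positivity)
  simp_rw [← hfactor] at htail
  have hall := HasProd.zero_mul
    (f := fun k : ℕ => (a ^ 2 + (π * k / L) ^ 2) / |(π * k / L) ^ 2 - 1|) htail
  have hvalue : (a ^ 2 + (π * (0 : ℕ) / L) ^ 2) / |(π * (0 : ℕ) / L) ^ 2 - 1|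
      * (sinh (a * L) / (a * L) / (sin L / L)) = a * sinh (a * L) / sin L := by
    norm_num
    field_simp
  rwa [hvalue] at hall

end Real

lemma one_div_two_pi_mul_sqrt_sqrt_two_mul (S : ℝ) :
    1 / (2 * π) * √(√2 * S) = 1 / (2 ^ ((3 : ℝ) / 4) * π) * √S := by
  have hquarter : √(√2) = (2 : ℝ) ^ ((1 : ℝ) / 4) := by
    rw [sqrt_eq_rpow, sqrt_eq_rpow, ← rpow_mul zero_le_two]
    norm_num
  have htwo : (2 : ℝ) ^ ((3 : ℝ) / 4) * 2 ^ ((1 : ℝ) / 4) = 2 := by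
    rw [← rpow_add zero_lt_two]
    norm_num
  rw [sqrt_mul (sqrt_nonneg 2), hquarter]
  field_simp
  linear_combination √S * htwo

theorem stmt_0 (L : ℝ) (hL0 : 0 < L) (hLpi : L < π) :
    HasProd (fun k : ℕ => (2 + (π * k / L) ^ 2) / |(π * k / L) ^ 2 - 1|)
      (Real.sqrt 2 * Real.sinh (Real.sqrt 2 * L) / Real.sin L) ∧
    (1 / (2 * π)) *
        Real.sqrt (∏' k : ℕ, (2 + (π * k / L) ^ 2) / |(-1) + (π * k / L) ^ 2|) =
      (1 / (2 ^ ((3 : ℝ) / 4) * π)) *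
        Real.sqrt (Real.sinh (Real.sqrt 2 * L) / Real.sin L) := by
  have hprod := Real.hasProd_sq_add_div_abs_sq_sub_one (a := √2) (by positivity) hL0 hLpi
  rw [sq_sqrt zero_le_two] at hprod
  refine ⟨hprod, ?_⟩
  simp_rw [neg_add_eq_sub, hprod.tprod_eq, mul_div_assoc]
  exact one_div_two_pi_mul_sqrt_sqrt_two_mul _
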